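/- Let k ≥ 2 and let G = Q_{q_1,q_2,…,q_t} be a generalised θ-graph with q_1 + q_2 ≥ 2k. Then G is k-color connectable and cc_k(G) = k. -/

import Mathlib

open SimpleGraph

/-- `c` is a `k`-color connecting edge-coloring of `G`: between every pair of distinct
vertices there is a path whose edges use at least `k` different colors. -/
def SimpleGraph.IsKColorConnecting {V : Type*} (G : SimpleGraph V) (k : ℕ)
    (c : Sym2 V → ℕ) : Prop :=
  ∀ u v : V, u ≠ v → ∃ p : G.Walk u v, p.IsPath ∧ k ≤ (p.edges.map c).toFinset.card

/-- `G` is `k`-color connectable: it admits a `k`-color connecting coloring. -/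
def SimpleGraph.KColorConnectable {V : Type*} (G : SimpleGraph V) (k : ℕ) : Prop :=
  ∃ c : Sym2 V → ℕ, G.IsKColorConnecting k c

/-- The `k`-color connection number `cc_k(G)`: the minimum number of colors used on the
edges of `G` by a `k`-color connecting coloring. -/
noncomputable def SimpleGraph.ccConn {V : Type*} (G : SimpleGraph V) (k : ℕ) : ℕ :=
  sInf {n : ℕ | ∃ c : Sym2 V → ℕ, G.IsKColorConnecting k c ∧ (c '' G.edgeSet).ncard = n}

/-- `G` is a generalised θ-graph with `t` paths, the `i`-th of length `q i`:
`G` is the union of `t` pairwise internally vertex-disjoint paths sharing the same two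
end-vertices `x ≠ y`, and `G` has no further vertices or edges. -/
inductive SimpleGraph.IsGenTheta {V : Type*} (G : SimpleGraph V) (t : ℕ)
    (q : Fin t → ℕ) : Prop
  | mk (x y : V) (hxy : x ≠ y) (p : ∀ _ : Fin t, G.Walk x y)
      (hpath : ∀ i, (p i).IsPath) (hlen : ∀ i, (p i).length = q i)
      (hdisj : ∀ i j, i ≠ j → ∀ w, w ∈ (p i).support → w ∈ (p j).support → w = x ∨ w = y)
      (hverts : ∀ w : V, ∃ i, w ∈ (p i).support)
      (hedges : ∀ e : Sym2 V, e ∈ G.edgeSet ↔ ∃ i, e ∈ (p i).edges) :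
      IsGenTheta G t q

/-!
Let `A` and `B` be the two longest branches. Their union is a cycle `C` through `x` and `y` of
length `n = q₁ + q₂ ≥ 2k`, and `A` has at least `k` edges. Number the edges of `C` from `x`
along `A` and back along `B`, give edge `l` the color `l % k`, and all other edges color `0`.
Any `k` consecutive edges of `C` show all `k` colors, and since `n ≥ 2k`, so does an arc crossing
`x` whose complementary arc is shorter than `k`. Two vertices of `C` are joined by whichever of
their two arcs qualifies; a vertex of `C` other than `x` reaches `x` along its longer arc, from
where the branch of a vertex off `C` continues; and two vertices off `C` are joined through all
of `A`, entering and leaving it at `x` and `y` along their branches. Conversely a single path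
already shows `k` colors, so no `k`-color connecting coloring uses fewer.
-/

lemma Nat.exists_mod_eq_of_add_le {k i j r : ℕ} (h : i + k ≤ j) (hr : r < k) :
    ∃ l, i ≤ l ∧ l < j ∧ l % k = r := by
  have hik : i % k < k := Nat.mod_lt _ (by omega)
  refine ⟨i + (r + k - i % k) % k, by omega, ?_, ?_⟩
  · have := Nat.mod_lt (r + k - i % k) (by omega : 0 < k); omega
  · rw [Nat.add_mod, Nat.mod_mod, Nat.add_mod_mod, Nat.add_sub_cancel' (by omega),
      Nat.add_mod_right, Nat.mod_eq_of_lt hr]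

-- The first `l ≥ j` with `l % k = r` is below `j + k`; if it is not below `n ≥ 2 * k`,
-- then `r ≤ l - 2 * k < i`.
lemma Nat.exists_mod_eq_of_lt_add {k i j n r : ℕ} (hji : j < i + k) (hn : 2 * k ≤ n)
    (hr : r < k) : (∃ l < i, l % k = r) ∨ ∃ l, j ≤ l ∧ l < n ∧ l % k = r := by
  obtain ⟨l, hjl, hlj, hl⟩ := Nat.exists_mod_eq_of_add_le (le_refl (j + k)) hr
  by_cases hln : l < n
  · exact .inr ⟨l, hjl, hln, hl⟩
  · refine .inl ⟨r, ?_, Nat.mod_eq_of_lt hr⟩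
    have : r ≤ l - 2 * k := by
      rw [← hl, ← Nat.sub_mul_mod (by omega : k * 2 ≤ l), mul_comm]
      exact Nat.mod_le _ _
    omega

section ModColoring

variable {α : Type*} {c : α → ℕ} {k : ℕ} {L : List α}

lemma range_subset_colors_drop_take (hc : ∀ l (hl : l < L.length), c L[l] = l % k) {i j : ℕ}
    (h : i + k ≤ j) (hj : j ≤ L.length) :
    Finset.range k ⊆ (((L.take j).drop i).map c).toFinset := by
  intro r hr
  obtain ⟨l, hil, hlj, rfl⟩ := Nat.exists_mod_eq_of_add_le h (Finset.mem_range.mp hr)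
  rw [List.mem_toFinset, ← hc l (by omega)]
  refine List.mem_map_of_mem (List.mem_iff_getElem.mpr ⟨l - i, by simp; omega, ?_⟩)
  simp [Nat.add_sub_cancel' hil]

lemma range_subset_colors_drop_append_take (hc : ∀ l (hl : l < L.length), c L[l] = l % k)
    {i j : ℕ} (hij : i < j) (hji : j < i + k) (hj : j ≤ L.length) (hL : 2 * k ≤ L.length) :
    Finset.range k ⊆ ((L.drop j ++ L.take i).map c).toFinset := by
  intro r hr
  rw [List.mem_toFinset, List.map_append, List.mem_append]
  rcases Nat.exists_mod_eq_of_lt_add hji hL (Finset.mem_range.mp hr) with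
    ⟨l, hli, rfl⟩ | ⟨l, hjl, hln, rfl⟩
  · rw [← hc l (by omega)]
    refine .inr (List.mem_map_of_mem (List.mem_iff_getElem.mpr ⟨l, by simp; omega, ?_⟩))
    simp
  · rw [← hc l hln]
    refine .inl (List.mem_map_of_mem (List.mem_iff_getElem.mpr ⟨l - j, by simp; omega, ?_⟩))
    simp [Nat.add_sub_cancel' hjl]

end ModColoring

namespace SimpleGraph.Walk

variable {V : Type*} {G : SimpleGraph V} {u v w x y : V}

lemma IsPath.append {p : G.Walk u v} {q : G.Walk v w} (hp : p.IsPath) (hq : q.IsPath)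
    (h : ∀ z ∈ p.support, z ∈ q.support → z = v) : (p.append q).IsPath := by
  have hq' := hq.support_nodup
  rw [q.cons_tail_support.symm, List.nodup_cons] at hq'
  rw [isPath_def, support_append]
  refine hp.support_nodup.append hq'.2 fun z hzp hzq => ?_
  obtain rfl := h z hzp (q.cons_tail_support.symm ▸ List.mem_cons_of_mem _ hzq)
  exact hq'.1 hzq

lemma exists_getVert_of_mem_support_take {p : G.Walk u v} {n : ℕ}
    (h : w ∈ (p.take n).support) : ∃ i ≤ n, i ≤ p.length ∧ p.getVert i = w := by
  obtain ⟨i, rfl, hi⟩ := mem_support_iff_exists_getVert.mp h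
  refine ⟨min n i, min_le_left _ _, ?_, (p.take_getVert n i).symm⟩
  simp at hi; omega

lemma exists_getVert_of_mem_support_drop {p : G.Walk u v} {n : ℕ} (hn : n ≤ p.length)
    (h : w ∈ (p.drop n).support) : ∃ i, n ≤ i ∧ i ≤ p.length ∧ p.getVert i = w := by
  obtain ⟨i, rfl, hi⟩ := mem_support_iff_exists_getVert.mp h
  refine ⟨n + i, le_add_right le_rfl, ?_, (p.drop_getVert n i).symm⟩
  simp at hi; omega

lemma IsPath.end_notMem_support_take {p : G.Walk x y} (hp : p.IsPath) {n : ℕ}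
    (hn : n < p.length) : y ∉ (p.take n).support := by
  intro h
  obtain ⟨i, hin, hi, hiy⟩ := exists_getVert_of_mem_support_take h
  have := (hp.getVert_eq_end_iff hi).mp hiy
  omega

lemma IsPath.start_notMem_support_drop {p : G.Walk x y} (hp : p.IsPath) {n : ℕ}
    (hn : 0 < n) (hnp : n ≤ p.length) : x ∉ (p.drop n).support := by
  intro h
  obtain ⟨i, hin, hi, hix⟩ := exists_getVert_of_mem_support_drop hnp h
  have := (hp.getVert_eq_start_iff hi).mp hix
  omega

lemma IsPath.disjoint_support_take_drop {p : G.Walk x y} (hp : p.IsPath) {m n : ℕ}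
    (hmn : m < n) (hnp : n ≤ p.length) : (p.take m).support.Disjoint (p.drop n).support := by
  intro z hm hn
  obtain ⟨i, him, hi, rfl⟩ := exists_getVert_of_mem_support_take hm
  obtain ⟨j, hnj, hj, hji⟩ := exists_getVert_of_mem_support_drop hnp hn
  have := hp.getVert_injOn hj hi hji
  omega

lemma IsCycle.eq_of_mem_support_take_of_mem_support_drop {c : G.Walk x x} (hc : c.IsCycle) {m n : ℕ}
    (hmn : m < n) (hnc : n ≤ c.length) (hm : w ∈ (c.take m).support)
    (hn : w ∈ (c.drop n).support) : w = x := by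
  obtain ⟨i, him, hi, rfl⟩ := exists_getVert_of_mem_support_take hm
  obtain ⟨j, hnj, hj, hji⟩ := exists_getVert_of_mem_support_drop hnc hn
  rcases Nat.eq_zero_or_pos i with rfl | hi0
  · exact getVert_zero c
  · have := hc.getVert_injOn (by simp; omega) (by simp; omega) hji
    omega

lemma IsPath.isCycle_append_reverse {A B : G.Walk x y} (hA : A.IsPath) (hB : B.IsPath)
    (hAB : ∀ w ∈ A.support, w ∈ B.support → w = x ∨ w = y) (hA2 : 1 < A.length) :
    (A.append B.reverse).IsCycle := by
  refine hA.isCycle_append hB.reverse (fun w hwA hwB => ?_) (.inl hA2)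
  have hA' := A.cons_tail_support ▸ hA.support_nodup
  have hB' := B.reverse.cons_tail_support ▸ hB.reverse.support_nodup
  rw [List.nodup_cons] at hA' hB'
  have hwB' : w ∈ B.support := by
    simpa using List.mem_of_mem_tail hwB
  rcases hAB w (List.mem_of_mem_tail hwA) hwB' with rfl | rfl
  exacts [hA'.1 hwA, hB'.1 hwB]

lemma IsCycle.exists_getVert_eq {C : G.Walk x x} (hC : C.IsCycle) (hu : u ∈ C.support) :
    ∃ i < C.length, C.getVert i = u := by
  obtain ⟨i, rfl, hi⟩ := mem_support_iff_exists_getVert.mp hu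
  rcases hi.lt_or_eq with hi | rfl
  · exact ⟨i, hi, rfl⟩
  · exact ⟨0, hC.three_le_length.trans_lt' (by norm_num), by simp⟩

lemma IsCycle.exists_isPath_edges_eq_slice {c : G.Walk x x} (hc : c.IsCycle) {i j : ℕ}
    (hij : i < j) (hj : j ≤ c.length) (h : 0 < i ∨ j < c.length) :
    ∃ p : G.Walk (c.getVert i) (c.getVert j), p.IsPath ∧
      p.edges = (c.edges.take j).drop i := by
  rcases hj.lt_or_eq with hj | rfl
  · refine ⟨((c.take j).drop i).copy (by rw [take_getVert, min_eq_right hij.le]) rfl, ?_, ?_⟩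
    · simpa using (hc.isPath_take hj).drop i
    · simp [edges_drop, edges_take]
  · refine ⟨(c.drop i).copy rfl c.getVert_length.symm, ?_, ?_⟩
    · simpa using hc.isPath_drop (h.resolve_right (lt_irrefl _))
    · simp [edges_drop, List.take_of_length_le]

lemma IsCycle.exists_isPath_edges_eq_drop_append_take {c : G.Walk x x} (hc : c.IsCycle)
    {i j : ℕ} (hij : i < j) (hj : j < c.length) :
    ∃ p : G.Walk (c.getVert j) (c.getVert i), p.IsPath ∧
      p.edges = c.edges.drop j ++ c.edges.take i :=
  ⟨(c.drop j).append (c.take i),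
    (hc.isPath_drop (by omega)).append (hc.isPath_take (by omega))
      fun _ hd ht => hc.eq_of_mem_support_take_of_mem_support_drop hij hj.le ht hd,
    by simp [edges_drop, edges_take]⟩

lemma IsTrail.exists_coloring_getElem_edges {p : G.Walk u v} (hp : p.IsTrail) {k : ℕ}
    (hk : 0 < k) : ∃ c : Sym2 V → ℕ, (∀ e, c e < k) ∧
      ∀ l (hl : l < p.edges.length), c p.edges[l] = l % k := by
  classical
  refine ⟨fun e => if e ∈ p.edges then p.edges.idxOf e % k else 0, fun e => ?_, fun l hl => ?_⟩
  · dsimp only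
    split_ifs
    exacts [Nat.mod_lt _ hk, hk]
  · simp [hp.edges_nodup.idxOf_getElem]

end SimpleGraph.Walk

namespace SimpleGraph

variable {V : Type*} {G : SimpleGraph V} {k : ℕ} {c : Sym2 V → ℕ} {u v x y : V}

def KColorJoined (G : SimpleGraph V) (k : ℕ) (c : Sym2 V → ℕ) (u v : V) : Prop :=
  ∃ p : G.Walk u v, p.IsPath ∧ k ≤ (p.edges.map c).toFinset.card

lemma KColorJoined.symm (h : G.KColorJoined k c u v) : G.KColorJoined k c v u := by
  obtain ⟨p, hp, hk⟩ := h
  refine ⟨p.reverse, hp.reverse, ?_⟩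
  rwa [Walk.edges_reverse, List.map_reverse, List.toFinset_reverse]

lemma kColorJoined_of_subset_edges {p : G.Walk u v} (hp : p.IsPath) {L : List (Sym2 V)}
    (hL : L ⊆ p.edges) (h : Finset.range k ⊆ (L.map c).toFinset) : G.KColorJoined k c u v := by
  refine ⟨p, hp, ?_⟩
  simpa using Finset.card_le_card (h.trans fun r => by simpa using fun e he hr => ⟨e, hL he, hr⟩)

section Cycle

variable {C : G.Walk x x} (hC : C.IsCycle)
  (hc : ∀ l (hl : l < C.edges.length), c C.edges[l] = l % k) (hCk : 2 * k ≤ C.length)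
include hC hc hCk

-- Either the arc from `i` to `j` has at least `k` edges, or the complementary arc through `x`
-- is longer than `n - k`.
lemma kColorJoined_of_mem_support_cycle (hu : u ∈ C.support) (hv : v ∈ C.support)
    (huv : u ≠ v) : G.KColorJoined k c u v := by
  obtain ⟨i, hi, rfl⟩ := hC.exists_getVert_eq hu
  obtain ⟨j, hj, rfl⟩ := hC.exists_getVert_eq hv
  clear hu hv
  wlog hij : i < j generalizing i j
  · exact (this j hj i hi huv.symm (by grind)).symm
  by_cases hk : i + k ≤ j
  · obtain ⟨p, hp, hpe⟩ := hC.exists_isPath_edges_eq_slice hij hj.le (.inr hj)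
    exact kColorJoined_of_subset_edges hp (hpe ▸ List.Subset.refl _)
      (range_subset_colors_drop_take hc hk (by simpa using hj.le))
  · obtain ⟨p, hp, hpe⟩ := hC.exists_isPath_edges_eq_drop_append_take hij hj
    exact (kColorJoined_of_subset_edges hp (hpe ▸ List.Subset.refl _)
      (range_subset_colors_drop_append_take hc hij (by omega) (by simpa using hj.le)
        (by simpa using hCk))).symm

-- Of the two arcs from `u` to `x`, the longer one has at least `n / 2 ≥ k` edges.
lemma exists_isPath_support_subset_to_start (hu : u ∈ C.support) (hux : u ≠ x) :
    ∃ p : G.Walk u x, p.IsPath ∧ p.support ⊆ C.support ∧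
      Finset.range k ⊆ (p.edges.map c).toFinset := by
  obtain ⟨i, hi, rfl⟩ := hC.exists_getVert_eq hu
  have hi0 : i ≠ 0 := by rintro rfl; simp at hux
  by_cases hik : k ≤ i
  · refine ⟨(C.take i).reverse, (hC.isPath_take hi).reverse, ?_, ?_⟩
    · simpa [Walk.support_take] using List.take_subset _ _
    · simpa [Walk.edges_take, List.map_reverse, List.map_take] using
        range_subset_colors_drop_take (i := 0) hc (by simpa using hik) (by simpa using hi.le)
  · refine ⟨C.drop i, hC.isPath_drop (by omega), by simpa using List.drop_subset _ _, ?_⟩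
    simpa [Walk.edges_drop, List.take_of_length_le] using
      range_subset_colors_drop_take (j := C.length) hc (by omega) (by simp)

lemma kColorJoined_of_mem_support_cycle_of_ear (hu : u ∈ C.support) (hux : u ≠ x)
    {Q : G.Walk x y} (hQ : Q.IsPath) (hQC : ∀ z ∈ Q.support, z ∈ C.support → z = x ∨ z = y)
    {m : ℕ} (hm : m < Q.length) :
    G.KColorJoined k c u (Q.getVert m) := by
  obtain ⟨p, hp, hpC, hpk⟩ := exists_isPath_support_subset_to_start hC hc hCk hu hux
  refine kColorJoined_of_subset_edges (hp.append (hQ.take m) fun z hzp hzQ => ?_)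
    (by simp [Walk.edges_append]) hpk
  rcases hQC z ((Q.isSubwalk_take m).support_subset hzQ) (hpC hzp) with rfl | rfl
  · rfl
  · exact absurd hzQ (hQ.end_notMem_support_take hm)

end Cycle

-- The path runs from `P.getVert s` back to `x` along `P`, through all of `A`, and from `y`
-- back to `Q.getVert m` along `Q`.
lemma kColorJoined_of_ears {A P Q : G.Walk x y} (hA : A.IsPath)
    (hAk : Finset.range k ⊆ (A.edges.map c).toFinset) (hP : P.IsPath)
    (hPA : ∀ z ∈ P.support, z ∈ A.support → z = x ∨ z = y) (hQ : Q.IsPath)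
    (hQA : ∀ z ∈ Q.support, z ∈ A.support → z = x ∨ z = y) {s m : ℕ} (hs : s < P.length)
    (hm : 0 < m) (hmQ : m ≤ Q.length) (hPQ : (P.take s).support.Disjoint (Q.drop m).support) :
    G.KColorJoined k c (P.getVert s) (Q.getVert m) := by
  have hAQ : (A.append (Q.drop m).reverse).IsPath := by
    refine hA.append (hQ.drop m).reverse fun z hzA hzQ => ?_
    rw [Walk.support_reverse, List.mem_reverse] at hzQ
    rcases hQA z ((Q.isSubwalk_drop m).support_subset hzQ) hzA with rfl | rfl
    · exact absurd hzQ (hQ.start_notMem_support_drop hm hmQ)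
    · rfl
  refine kColorJoined_of_subset_edges ((hP.take s).reverse.append hAQ fun z hzP hzAQ => ?_)
    (by simp [Walk.edges_append]) hAk
  rw [Walk.support_reverse, List.mem_reverse] at hzP
  rcases (Walk.mem_support_append_iff _ _).mp hzAQ with hzA | hzQ
  · rcases hPA z ((P.isSubwalk_take s).support_subset hzP) hzA with rfl | rfl
    · rfl
    · exact absurd hzP (hP.end_notMem_support_take hs)
  · rw [Walk.support_reverse, List.mem_reverse] at hzQ
    exact absurd hzQ (hPQ hzP)

section Theta

variable {t : ℕ} {p : Fin t → G.Walk x y} {i₀ i₁ : Fin t}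

lemma exists_getVert_eq_of_notMem_support_append (hverts : ∀ w : V, ∃ i, w ∈ (p i).support)
    (hv : v ∉ ((p i₀).append (p i₁).reverse).support) :
    ∃ j, j ≠ i₀ ∧ j ≠ i₁ ∧ ∃ m, 0 < m ∧ m < (p j).length ∧ (p j).getVert m = v := by
  simp only [Walk.mem_support_append_iff, Walk.support_reverse, List.mem_reverse, not_or] at hv
  obtain ⟨j, hj⟩ := hverts v
  obtain ⟨m, rfl, hm⟩ := Walk.mem_support_iff_exists_getVert.mp hj
  refine ⟨j, fun h => hv.1 (h ▸ hj), fun h => hv.2 (h ▸ hj), m, Nat.pos_of_ne_zero ?_,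
    hm.lt_of_ne ?_, rfl⟩
  · rintro rfl
    exact hv.1 (by simp)
  · rintro rfl
    exact hv.1 (by simp)

lemma kColorJoined_of_notMem_support_append (hpath : ∀ i, (p i).IsPath)
    (hdisj : ∀ i j, i ≠ j → ∀ w, w ∈ (p i).support → w ∈ (p j).support → w = x ∨ w = y)
    (hverts : ∀ w : V, ∃ i, w ∈ (p i).support) (hC : ((p i₀).append (p i₁).reverse).IsCycle)
    (hc : ∀ l (hl : l < ((p i₀).append (p i₁).reverse).edges.length),
      c ((p i₀).append (p i₁).reverse).edges[l] = l % k)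
    (hCk : 2 * k ≤ ((p i₀).append (p i₁).reverse).length)
    (hAk : Finset.range k ⊆ ((p i₀).edges.map c).toFinset) (huv : u ≠ v)
    (hv : v ∉ ((p i₀).append (p i₁).reverse).support) : G.KColorJoined k c u v := by
  obtain ⟨j, hj₀, hj₁, m, hm₀, hmj, rfl⟩ :=
    exists_getVert_eq_of_notMem_support_append hverts hv
  have hjA := hdisj j i₀ hj₀
  by_cases hu : u ∈ ((p i₀).append (p i₁).reverse).support
  · by_cases hux : u = x
    · subst hux
      simpa using kColorJoined_of_ears (s := 0) (hpath i₀) hAk (hpath j) hjA (hpath j) hjA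
        (by omega) hm₀ hmj.le ((hpath j).disjoint_support_take_drop hm₀ hmj.le)
    · refine kColorJoined_of_mem_support_cycle_of_ear hC hc hCk hu hux (hpath j)
        (fun z hzj hzC => ?_) hmj
      rcases (Walk.mem_support_append_iff _ _).mp hzC with hz | hz
      · exact hjA z hzj hz
      · exact hdisj j i₁ hj₁ z hzj (by simpa using hz)
  obtain ⟨i, hi₀, -, s, hs₀, hsi, rfl⟩ :=
    exists_getVert_eq_of_notMem_support_append hverts hu
  have hiA := hdisj i i₀ hi₀
  by_cases hij : i = j
  · subst hij
    rcases lt_trichotomy s m with hsm | rfl | hms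
    · exact kColorJoined_of_ears (hpath i₀) hAk (hpath i) hiA (hpath i) hiA hsi hm₀ hmj.le
        ((hpath i).disjoint_support_take_drop hsm hmj.le)
    · exact absurd rfl huv
    · exact (kColorJoined_of_ears (hpath i₀) hAk (hpath i) hiA (hpath i) hiA hmj hs₀ hsi.le
        ((hpath i).disjoint_support_take_drop hms hsi.le)).symm
  · refine kColorJoined_of_ears (hpath i₀) hAk (hpath i) hiA (hpath j) hjA hsi hm₀ hmj.le
      fun z hzi hzj => ?_
    rcases hdisj i j hij z ((Walk.isSubwalk_take _ _).support_subset hzi)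
      ((Walk.isSubwalk_drop _ _).support_subset hzj) with rfl | rfl
    · exact (hpath j).start_notMem_support_drop hm₀ hmj.le hzj
    · exact (hpath i).end_notMem_support_take hsi hzi

lemma exists_isKColorConnecting_ncard_eq (hpath : ∀ i, (p i).IsPath)
    (hdisj : ∀ i j, i ≠ j → ∀ w, w ∈ (p i).support → w ∈ (p j).support → w = x ∨ w = y)
    (hverts : ∀ w : V, ∃ i, w ∈ (p i).support) (h01 : i₀ ≠ i₁) (hk : 2 ≤ k)
    (hk₀ : k ≤ (p i₀).length) (hk₀₁ : 2 * k ≤ (p i₀).length + (p i₁).length) :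
    ∃ c : Sym2 V → ℕ, G.IsKColorConnecting k c ∧ (c '' G.edgeSet).ncard = k := by
  set C := (p i₀).append (p i₁).reverse
  have hC : C.IsCycle :=
    (hpath i₀).isCycle_append_reverse (hpath i₁) (hdisj i₀ i₁ h01) (by omega)
  have hCk : 2 * k ≤ C.length := by simpa [C] using hk₀₁
  obtain ⟨c, hck, hc⟩ := hC.isTrail.exists_coloring_getElem_edges (k := k) (by omega)
  have hAk : Finset.range k ⊆ ((p i₀).edges.map c).toFinset := by
    simpa [C, Walk.edges_append, List.take_left'] using
      range_subset_colors_drop_take (i := 0) (j := (p i₀).length) hc (by simpa using hk₀)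
        (by simp [C])
  have hoff {u v : V} (huv : u ≠ v) (hv : v ∉ C.support) : G.KColorJoined k c u v :=
    kColorJoined_of_notMem_support_append hpath hdisj hverts hC hc hCk hAk huv hv
  refine ⟨c, fun u v huv => ?_, ?_⟩
  · by_cases hu : u ∈ C.support
    · by_cases hv : v ∈ C.support
      · exact kColorJoined_of_mem_support_cycle hC hc hCk hu hv huv
      · exact hoff huv hv
    · exact (hoff huv.symm hu).symm
  suffices c '' G.edgeSet = Set.Iio k by simp [this]
  refine Set.Subset.antisymm (by rintro _ ⟨e, -, rfl⟩; exact hck e) fun r (hr : r < k) => ?_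
  have hrC : r < C.edges.length := by simp; omega
  exact ⟨C.edges[r], C.edges_subset_edgeSet (List.getElem_mem _),
    by rw [hc, Nat.mod_eq_of_lt hr]⟩

end Theta

-- `Finite V` matters: `Set.ncard` of an infinite set is `0`.
lemma IsKColorConnecting.le_ncard_image [Finite V] (hc : G.IsKColorConnecting k c)
    (huv : u ≠ v) : k ≤ (c '' G.edgeSet).ncard := by
  obtain ⟨p, -, hk⟩ := hc u v huv
  rw [← Set.ncard_coe_finset] at hk
  refine hk.trans (Set.ncard_le_ncard ?_ (Set.toFinite _))
  intro r hr
  obtain ⟨e, he, rfl⟩ := List.mem_map.mp (List.mem_toFinset.mp hr)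
  exact ⟨e, p.edges_subset_edgeSet he, rfl⟩

lemma ccConn_eq_of_isKColorConnecting [Finite V] (huv : u ≠ v) (hc : G.IsKColorConnecting k c)
    (himg : (c '' G.edgeSet).ncard = k) : G.ccConn k = k := by
  have hmem : k ∈ {n | ∃ c : Sym2 V → ℕ, G.IsKColorConnecting k c ∧
      (c '' G.edgeSet).ncard = n} := ⟨c, hc, himg⟩
  refine (Nat.sInf_le hmem).antisymm (le_csInf ⟨k, hmem⟩ ?_)
  rintro _ ⟨c', hc', rfl⟩
  exact hc'.le_ncard_image huv

end SimpleGraph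

theorem stmt_15 {V : Type*} (G : SimpleGraph V) (k t : ℕ) (hk : 2 ≤ k) (ht : 2 ≤ t)
    (q : Fin t → ℕ) (hmono : ∀ i j : Fin t, i ≤ j → q j ≤ q i) (hG : G.IsGenTheta t q)
    (hq : 2 * k ≤ q ⟨0, by omega⟩ + q ⟨1, by omega⟩) :
    G.KColorConnectable k ∧ G.ccConn k = k := by
  obtain ⟨x, y, hxy, p, hpath, hlen, hdisj, hverts, -⟩ := hG
  have : Finite V := Set.finite_univ_iff.mp <|
    (Set.finite_iUnion fun i => (p i).support.finite_toSet).subset fun w _ =>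
      Set.mem_iUnion.mpr (hverts w)
  have h₁₀ := hmono ⟨0, by omega⟩ ⟨1, by omega⟩ (by simp [Fin.le_def])
  obtain ⟨c, hc, himg⟩ := exists_isKColorConnecting_ncard_eq hpath hdisj hverts
    (i₀ := ⟨0, by omega⟩) (i₁ := ⟨1, by omega⟩) (by simp [Fin.ext_iff]) hk
    (by rw [hlen]; omega) (by rw [hlen, hlen]; omega)
  exact ⟨⟨c, hc⟩, ccConn_eq_of_isKColorConnecting hxy hc himg⟩
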